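/- (Optimal value decoupling.) Consider a finite-horizon MDP whose state and action spaces factor over k disjoint groups, S = Π_{j=1}^{k} S^{(j)} and A = Π_{j=1}^{k} A^{(j)}, whose transition function factors as T(s,a,s') = Π_{j=1}^{k} T^{(j)}(s^{(j)},a^{(j)},s'^{(j)}) with each T^{(j)} nonnegative and normalized, and whose reward decomposes with no cross-group terms as R(s,a,s') = Σ_{j=1}^{k} R_j(s^{(j)},a^{(j)},s'^{(j)}). Then the optimal value function decouples: for all t ≤ h and all s, V*_t(s) = Σ_{j=1}^{k} V*_{j,t}(s^{(j)}), where V*_j is the optimal value function of the group-j MDP (S^{(j)}, A^{(j)}, T^{(j)}, R_j). -/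
import Mathlib

section Aux

variable {J : Type} [Fintype J] [DecidableEq J]

lemma aux_key {S : J → Type} [∀ j, Fintype (S j)]
    (u : ∀ j, S j → ℝ) (hu : ∀ j, ∑ x, u j x = 1) (j : J) (F : S j → ℝ) :
    ∑ s' : ∀ i, S i, (∏ i, u i (s' i)) * F (s' j) = ∑ x, u j x * F x := by
  have h1 : ∀ s' : ∀ i, S i,
      (∏ i, u i (s' i)) * F (s' j)
        = ∏ i, Function.update u j (fun x => u j x * F x) i (s' i) := by
    intro s'
    rw [← Finset.prod_erase_mul Finset.univ _ (Finset.mem_univ j),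
        ← Finset.prod_erase_mul Finset.univ _ (Finset.mem_univ j)]
    rw [Function.update_self]
    rw [mul_assoc]
    congr 1
    apply Finset.prod_congr rfl
    intro i hi
    rw [Function.update_of_ne (Finset.ne_of_mem_erase hi)]
  simp_rw [h1]
  rw [← Fintype.prod_sum]
  rw [← Finset.prod_erase_mul Finset.univ _ (Finset.mem_univ j)]
  have herase : (∏ i ∈ Finset.univ.erase j,
      ∑ x, Function.update u j (fun x => u j x * F x) i x) = 1 := by
    rw [Finset.prod_congr rfl (fun i hi => ?_), Finset.prod_const_one]
    rw [show (∑ x, Function.update u j (fun x => u j x * F x) i x) = ∑ x, u i x from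
      Finset.sum_congr rfl fun x _ => by
        rw [Function.update_of_ne (Finset.ne_of_mem_erase hi)]]
    exact hu i
  rw [herase, one_mul]
  simp

lemma aux_sup {A : J → Type} [∀ j, Fintype (A j)] [∀ j, Nonempty (A j)]
    (Q : ∀ j, A j → ℝ) :
    (⨆ a : ∀ j, A j, ∑ j, Q j (a j)) = ∑ j, ⨆ b, Q j b := by
  apply le_antisymm
  · apply ciSup_le
    intro a
    apply Finset.sum_le_sum
    intro j _
    exact le_ciSup (Set.Finite.bddAbove (Set.finite_range _)) (a j)
  · choose b hb using fun j => exists_eq_ciSup_of_finite (f := Q j)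
    calc ∑ j, ⨆ c, Q j c = ∑ j, Q j (b j) := by
          refine Finset.sum_congr rfl fun j _ => (hb j).symm
      _ ≤ ⨆ a : ∀ j, A j, ∑ j, Q j (a j) :=
          le_ciSup (f := fun a : ∀ j, A j => ∑ j, Q j (a j))
            (Set.Finite.bddAbove (Set.finite_range _)) b

end Aux

/-!
STATEMENT 8 (optimal value decoupling): in a finite-horizon MDP whose state and action
spaces factor over `k` disjoint groups (indexed by a finite type `J`), with factored
transitions `T(s,a,s') = Π_j T^(j)` and group-decomposed reward `R(s,a,s') = Σ_j R_j`,
the optimal value function decouples: `V*_t(s) = Σ_j V*_{j,t}(s^(j))` for all `t ≤ h`.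
The maxima in the Bellman recursions are expressed with `⨆` over the (finite, nonempty)
action spaces.
-/
theorem statement8
    {J : Type} [Fintype J] [DecidableEq J]
    (S : J → Type) (A : J → Type)
    [∀ j, Fintype (S j)] [∀ j, Nonempty (S j)]
    [∀ j, Fintype (A j)] [∀ j, Nonempty (A j)]
    (h : ℕ)
    (Tj : (j : J) → S j → A j → S j → ℝ)
    (hT0 : ∀ j x a y, 0 ≤ Tj j x a y)
    (hT1 : ∀ j x a, ∑ y, Tj j x a y = 1)
    (Rj : (j : J) → S j → A j → S j → ℝ)
    -- the optimal value function of the joint MDP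
    (Vstar : ℕ → ((j : J) → S j) → ℝ)
    (hVh : ∀ s, Vstar h s = 0)
    (hV : ∀ t, t < h → ∀ s : (j : J) → S j,
      Vstar t s = ⨆ a : (j : J) → A j,
        ∑ s' : (j : J) → S j,
          (∏ j, Tj j (s j) (a j) (s' j)) *
            ((∑ j, Rj j (s j) (a j) (s' j)) + Vstar (t + 1) s'))
    -- the optimal value functions of the group MDPs
    (Vstarj : (j : J) → ℕ → S j → ℝ)
    (hVjh : ∀ j x, Vstarj j h x = 0)
    (hVj : ∀ j, ∀ t, t < h → ∀ x,
      Vstarj j t x = ⨆ b : A j,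
        ∑ x', Tj j x b x' * (Rj j x b x' + Vstarj j (t + 1) x')) :
    ∀ t, t ≤ h → ∀ s : (j : J) → S j, Vstar t s = ∑ j, Vstarj j t (s j) := by
  have main : ∀ d t, t + d = h → ∀ s : (j : J) → S j,
      Vstar t s = ∑ j, Vstarj j t (s j) := by
    intro d
    induction d with
    | zero =>
      intro t ht s
      simp only [Nat.add_zero] at ht
      subst ht
      simp [hVh, hVjh]
    | succ d ih =>
      intro t ht s
      have htlt : t < h := by omega
      have ih' : ∀ s', Vstar (t + 1) s' = ∑ j, Vstarj j (t + 1) (s' j) :=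
        ih (t + 1) (by omega)
      rw [hV t htlt s]
      have hinner : ∀ a : (j : J) → A j,
          (∑ s' : (j : J) → S j,
            (∏ j, Tj j (s j) (a j) (s' j)) *
              ((∑ j, Rj j (s j) (a j) (s' j)) + Vstar (t + 1) s'))
          = ∑ j, ∑ x', Tj j (s j) (a j) x' *
              (Rj j (s j) (a j) x' + Vstarj j (t + 1) x') := by
        intro a
        have step1 : ∀ s' : (j : J) → S j,
            (∏ j, Tj j (s j) (a j) (s' j)) *
              ((∑ j, Rj j (s j) (a j) (s' j)) + Vstar (t + 1) s')
            = ∑ j, (∏ i, Tj i (s i) (a i) (s' i)) *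
                (Rj j (s j) (a j) (s' j) + Vstarj j (t + 1) (s' j)) := by
          intro s'
          rw [ih' s', ← Finset.sum_add_distrib, Finset.mul_sum]
        simp_rw [step1]
        rw [Finset.sum_comm]
        refine Finset.sum_congr rfl fun j _ => ?_
        exact aux_key (fun i => Tj i (s i) (a i)) (fun i => hT1 i (s i) (a i)) j
          (fun x => Rj j (s j) (a j) x + Vstarj j (t + 1) x)
      simp_rw [hinner]
      rw [aux_sup (fun j b => ∑ x', Tj j (s j) b x' *
          (Rj j (s j) b x' + Vstarj j (t + 1) x'))]
      exact Finset.sum_congr rfl fun j _ => (hVj j t htlt (s j)).symm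
  intro t ht s
  exact main (h - t) t (by omega) s
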